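/- Let L_PC be the first-order language with two binary relation symbols P and C (and equality), and consider the L_PC-structure whose universe is the set of all lines in the Euclidean plane, with P interpreted as 'distinct and parallel' and C interpreted as 'intersect in exactly one point'. There is no L_PC-formula φ(x,y) with two free variables such that for all lines a, b: a is perpendicular to b if and only if φ[a,b] holds in this structure. (O is not definable from P, C and = in the structure of lines of the Euclidean plane.) -/

import Mathlib

open FirstOrder Language Structure

/-- The Euclidean plane ℝ². -/
abbrev Plane := EuclideanSpace ℝ (Fin 2)

/-- A line in the Euclidean plane: a one-dimensional affine subspace of ℝ². -/
structure Line where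
  carrier : AffineSubspace ℝ Plane
  one_dim : Module.finrank ℝ carrier.direction = 1

/-- Two lines are perpendicular iff their direction subspaces are orthogonal. -/
def Line.Perp (a b : Line) : Prop :=
  a.carrier.direction ⟂ b.carrier.direction

/-- The relation symbols of L_PC: two binary relations P and C. -/
inductive PCRel : ℕ → Type
  | p : PCRel 2
  | c : PCRel 2

/-- The first-order language with two binary relation symbols P and C. -/
def LPC : Language := ⟨fun _ => Empty, PCRel⟩
  deriving IsRelational

/-- The L_PC-structure of lines of the Euclidean plane: P is 'distinct and parallel',
C is 'intersect in exactly one point'. -/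
instance : LPC.Structure Line where
  RelMap
    | .p => fun x => x 0 ≠ x 1 ∧ (x 0).carrier.direction = (x 1).carrier.direction
    | .c => fun x => ∃ pt : Plane,
        ((x 0).carrier : Set Plane) ∩ ((x 1).carrier : Set Plane) = {pt}

/-! An affine automorphism of the plane permutes the lines and preserves both "distinct and
parallel" and "meeting in exactly one point", so it is an automorphism of the `LPC`-structure,
and every definable relation is invariant under it. The stretch `(x, y) ↦ (x, 2y)` sends the
perpendicular lines of slopes `1` and `-1` to the lines of slopes `2` and `-2`, which are not
perpendicular. -/

namespace Line

theorem carrier_injective : Function.Injective Line.carrier := by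
  rintro ⟨a, _⟩ ⟨b, _⟩ rfl
  rfl

noncomputable def map (e : Plane ≃ᵃ[ℝ] Plane) (l : Line) : Line where
  carrier := l.carrier.map e
  one_dim := by
    rw [AffineSubspace.map_direction, AffineEquiv.linear_toAffineMap, LinearEquiv.finrank_map_eq]
    exact l.one_dim

variable (e : Plane ≃ᵃ[ℝ] Plane)

theorem coe_map_carrier (l : Line) : ((l.map e).carrier : Set Plane) = e '' l.carrier := rfl

theorem direction_map (l : Line) :
    (l.map e).carrier.direction = l.carrier.direction.map (e.linear : Plane →ₗ[ℝ] Plane) := by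
  rw [map, AffineSubspace.map_direction, AffineEquiv.linear_toAffineMap]

theorem map_symm_map (l : Line) : (l.map e).map e.symm = l :=
  carrier_injective <| SetLike.coe_injective <| e.symm_image_image _

noncomputable def mapEquiv : Line ≃ Line where
  toFun := map e
  invFun := map e.symm
  left_inv := map_symm_map e
  right_inv := map_symm_map e.symm

theorem map_eq_map_iff {a b : Line} : a.map e = b.map e ↔ a = b :=
  (mapEquiv e).injective.eq_iff

theorem direction_map_eq_iff {a b : Line} :
    (a.map e).carrier.direction = (b.map e).carrier.direction ↔
      a.carrier.direction = b.carrier.direction := by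
  rw [direction_map, direction_map]
  exact (Submodule.map_injective_of_injective e.linear.injective).eq_iff

theorem exists_inter_map_eq_singleton_iff {a b : Line} :
    (∃ pt, ((a.map e).carrier : Set Plane) ∩ (b.map e).carrier = {pt}) ↔
      ∃ pt, (a.carrier : Set Plane) ∩ b.carrier = {pt} := by
  rw [← Set.encard_eq_one, ← Set.encard_eq_one, coe_map_carrier, coe_map_carrier,
    ← Set.image_inter e.injective, e.injective.encard_image]

noncomputable def mapLEquiv : Line ≃[LPC] Line where
  toEquiv := mapEquiv e
  map_fun' f := isEmptyElim f
  map_rel' r x := by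
    cases r with
    | p => exact and_congr (not_congr (map_eq_map_iff e)) (direction_map_eq_iff e)
    | c => exact exists_inter_map_eq_singleton_iff e

@[simp]
theorem mapLEquiv_apply (l : Line) : mapLEquiv e l = l.map e := rfl

noncomputable def mk' (p u : Plane) (hu : u ≠ 0) : Line where
  carrier := AffineSubspace.mk' p (ℝ ∙ u)
  one_dim := by rw [AffineSubspace.direction_mk']; exact finrank_span_singleton hu

theorem mk'_perp_mk'_iff {p q u w : Plane} (hu : u ≠ 0) (hw : w ≠ 0) :
    (mk' p u hu).Perp (mk' q w hw) ↔ inner ℝ u w = 0 := by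
  simp only [Perp, mk', AffineSubspace.direction_mk', Submodule.isOrtho_span,
    Set.mem_singleton_iff, forall_eq]

theorem map_mk' (p u : Plane) (hu : u ≠ 0) :
    (mk' p u hu).map e = mk' (e p) (e.linear u) (e.linear.map_ne_zero_iff.mpr hu) := by
  apply carrier_injective
  simp only [map, mk', AffineSubspace.map_mk', AffineEquiv.linear_toAffineMap,
    AffineEquiv.coe_toAffineMap, Submodule.map_span, Set.image_singleton]
  rfl

theorem slope_vec_ne_zero (t : ℝ) : !₂[1, t] ≠ 0 := fun h => by
  simpa using congrArg (· 0) h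

noncomputable def ofSlope (t : ℝ) : Line := mk' 0 !₂[1, t] (slope_vec_ne_zero t)

theorem ofSlope_perp_ofSlope_iff {s t : ℝ} : (ofSlope s).Perp (ofSlope t) ↔ 1 + s * t = 0 := by
  simp [ofSlope, mk'_perp_mk'_iff, PiLp.inner_apply, Fin.sum_univ_two, mul_comm]

end Line

noncomputable def stretch : Plane ≃ₗ[ℝ] Plane where
  toFun v := !₂[v 0, 2 * v 1]
  invFun v := !₂[v 0, v 1 / 2]
  map_add' x y := by ext i; fin_cases i <;> simp [mul_add]
  map_smul' c x := by ext i; fin_cases i <;> simp; ring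
  left_inv v := by ext i; fin_cases i <;> simp
  right_inv v := by ext i; fin_cases i <;> simp [mul_div_cancel₀]

theorem Line.map_stretch_ofSlope (t : ℝ) :
    (ofSlope t).map stretch.toAffineEquiv = ofSlope (2 * t) := by
  rw [ofSlope, map_mk']
  congr 1
  simp [stretch]

theorem FirstOrder.Language.Formula.rel_apply_equiv_iff_of_defines {L : Language} {M : Type*}
    [L.Structure M] {R : M → M → Prop} {φ : L.Formula (Fin 2)}
    (hφ : ∀ a b, R a b ↔ φ.Realize ![a, b]) (g : M ≃[L] M) (a b : M) :
    R (g a) (g b) ↔ R a b := by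
  have : ![g a, g b] = g ∘ ![a, b] := by ext i; fin_cases i <;> rfl
  rw [hφ, hφ, this, StrongHomClass.realize_formula]

/-- perpendicularity is not definable by any L_PC-formula in this structure. -/
theorem statement_11 :
    ¬ ∃ φ : LPC.Formula (Fin 2), ∀ a b : Line, (a.Perp b ↔ φ.Realize ![a, b]) := by
  rintro ⟨φ, hφ⟩
  have h := φ.rel_apply_equiv_iff_of_defines hφ (Line.mapLEquiv stretch.toAffineEquiv)
    (Line.ofSlope 1) (Line.ofSlope (-1))
  rw [Line.mapLEquiv_apply, Line.mapLEquiv_apply, Line.map_stretch_ofSlope,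
    Line.map_stretch_ofSlope, Line.ofSlope_perp_ofSlope_iff, Line.ofSlope_perp_ofSlope_iff] at h
  norm_num at h
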